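/- Let G be a finitely generated self-similar group over X, let p ≥ 1, and let g₁, …, g_m ∈ G be pairwise non-conjugate elements of infinite order such that for every i and every x ∈ X, the element (g_i^{k})|_x, where k = k_{g_i,x} is the length of the cycle of x under g_i on X, either has finite order or is conjugate in G to some g_j (i.e., the span U of the conjugacy classes [g₁],…,[g_m] is invariant under the Thurston p-map T_p). Let A be the m×m real matrix with entries A_{ij} = Σ_{x∈X} k_{g_i,x}^{−p} · 𝟙[(g_i^{k_{g_i,x}})|_x is conjugate in G to g_j] (the matrix of T_p restricted to U in the basis of these conjugacy classes). If η_{p,n₀} < 1 for some n₀ ≥ 1 (i.e. the ℓ^p-contraction coefficient η_p is < 1), then the spectral radius of A is strictly less than 1: every eigenvalue z ∈ ℂ of A, viewed as a complex matrix, satisfies |z| < 1. (Theorem 4.8 of the paper.) -/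

import Mathlib

/-!
Let `B_n` be the analogue of the Thurston matrix `T` in which letters are replaced by words of
length `n`. The cycle of a word `x v` under `g` has length `k_{g,x}` times the length of the
cycle of `v` under the section `(g^{k_{g,x}})|_x`, and the invariance hypothesis lets one replace
that section by the `g_j` it is conjugate to; hence `B_{n+1} = T B_n` and `B_n = T^n`.

Now fix `n` with `η_{p,n} < c < 1` and let `N` be a multiple of all cycle lengths of the `g_i` on
`X^n`. The section of `g_i^N` at a word `v` is then the `N/k`-th power of the section used in
`B_n`, and word lengths of powers are subadditive, so Minkowski's inequality gives
`(B_n W)_i ≤ (c l(g_i^N) + D)^p` for `W_j = l(g_j^N)^p`. As the `g_j` have infinite order,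
`l(g_j^N) → ∞`, and for large `N` this is `B_n W ≤ ρ W` with `ρ < 1` and `W > 0`. For a
nonnegative matrix this bounds the modulus of every eigenvalue by `ρ`, so `|z|^n ≤ ρ < 1`.
-/

open Filter Topology
open scoped ENNReal NNReal

/-- A self-similar group: a group `G` acting on the set of finite words `List X`
by length-preserving bijections, together with a section (restriction) map. -/
structure SelfSimilarGroup (X : Type*) (G : Type*) [Group G] where
  act : G → List X → List X
  sec : G → List X → G
  length_act : ∀ g v, (act g v).length = v.length
  act_append : ∀ g v w, act g (v ++ w) = act g v ++ act (sec g v) w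
  sec_append : ∀ g v w, sec g (v ++ w) = sec (sec g v) w
  act_one : ∀ v, act 1 v = v
  sec_one : ∀ v, sec 1 v = 1
  act_mul : ∀ g h v, act (g * h) v = act g (act h v)
  sec_mul : ∀ g h v, sec (g * h) v = sec g (act h v) * sec h v

/-- Word length with respect to a finite generating set `S`. -/
noncomputable def wordLength {G : Type*} [Group G] (S : Finset G) (g : G) : ℕ :=
  sInf {n | ∃ w : List G, (∀ s ∈ w, s ∈ S) ∧ w.length = n ∧ w.prod = g}

/-- The contraction coefficient `η_{p,n} ∈ [0,∞]`: the limsup of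
`(Σ_{v ∈ X^n} l(g|_v)^p)^{1/p} / l(g)` as `l(g) → ∞` (along the filter generated by
the sets `{g : l(g) ≥ m}`).  Words of length `n` are encoded as functions `Fin n → X`. -/
noncomputable def eta {X G : Type*} [Fintype X] [Group G]
    (A : SelfSimilarGroup X G) (S : Finset G) (p : ℝ) (n : ℕ) : ℝ≥0∞ :=
  Filter.limsup
    (fun g : G =>
      (∑ f : Fin n → X, (wordLength S (A.sec g (List.ofFn f)) : ℝ≥0∞) ^ p) ^ (1 / p)
        / (wordLength S g : ℝ≥0∞))
    (Filter.comap (wordLength S) Filter.atTop)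

/-- `N` is the nucleus of a contracting self-similar group: a finite subset containing `1`,
closed under sections, absorbing all sections of every element at deep enough levels. -/
def SelfSimilarGroup.IsNucleus {X G : Type*} [Group G]
    (A : SelfSimilarGroup X G) (N : Finset G) : Prop :=
  (1 : G) ∈ N ∧ (∀ g ∈ N, ∀ v : List X, A.sec g v ∈ N) ∧
    ∀ g : G, ∃ n₀ : ℕ, ∀ v : List X, n₀ ≤ v.length → A.sec g v ∈ N

/-- The length of the cycle of the word `v` under the permutation induced by `g`:
the least `k ≥ 1` with `g^k(v) = v`. -/
noncomputable def cycLen {X G : Type*} [Group G] (A : SelfSimilarGroup X G)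
    (g : G) (v : List X) : ℕ :=
  sInf {k | 1 ≤ k ∧ A.act (g ^ k) v = v}

open Classical in
/-- The matrix of the Thurston `p`-map on the span of the conjugacy classes
`[g 0],…,[g (m-1)]`: `A_{ij} = Σ_{x∈X} k_{g_i,x}^{−p} · 𝟙[(g_i^{k_{g_i,x}})|_x ~ g_j]`. -/
noncomputable def thurstonMatrix {X G : Type*} [Fintype X] [Group G]
    (A : SelfSimilarGroup X G) (p : ℝ) {m : ℕ} (g : Fin m → G) :
    Matrix (Fin m) (Fin m) ℝ :=
  Matrix.of fun i j =>
    ∑ x : X,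
      (cycLen A (g i) [x] : ℝ) ^ (-p) *
        (if IsConj (A.sec ((g i) ^ (cycLen A (g i) [x])) [x]) (g j) then 1 else 0)

section WordLength

variable {G : Type*} [Group G] {S : Finset G}

lemma wordLength_prod_le {w : List G} (hw : ∀ s ∈ w, s ∈ S) : wordLength S w.prod ≤ w.length :=
  Nat.sInf_le ⟨w, hw, rfl, rfl⟩

lemma exists_word_length_eq_wordLength (hgen : Subgroup.closure (S : Set G) = ⊤)
    (hsym : ∀ s ∈ S, s⁻¹ ∈ S) (g : G) :
    ∃ w : List G, (∀ s ∈ w, s ∈ S) ∧ w.length = wordLength S g ∧ w.prod = g := by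
  have hg : g ∈ Submonoid.closure ((S : Set G) ∪ (S : Set G)⁻¹) := by
    rw [← Subgroup.closure_toSubmonoid, hgen]; trivial
  obtain ⟨w, hw, hprod⟩ := Submonoid.exists_list_of_mem_closure hg
  have hword : ∀ s ∈ w, s ∈ S := fun s hs => (hw s hs).elim id fun h => by simpa using hsym _ h
  exact Nat.sInf_mem (s := {n | ∃ w : List G, (∀ s ∈ w, s ∈ S) ∧ w.length = n ∧ w.prod = g})
    ⟨w.length, w, hword, rfl, hprod⟩

lemma wordLength_mul_le (hgen : Subgroup.closure (S : Set G) = ⊤) (hsym : ∀ s ∈ S, s⁻¹ ∈ S)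
    (g h : G) : wordLength S (g * h) ≤ wordLength S g + wordLength S h := by
  obtain ⟨u, hu, hul, rfl⟩ := exists_word_length_eq_wordLength hgen hsym g
  obtain ⟨w, hw, hwl, rfl⟩ := exists_word_length_eq_wordLength hgen hsym h
  rw [← hul, ← hwl, ← List.length_append, ← List.prod_append]
  exact wordLength_prod_le fun s hs => (List.mem_append.mp hs).elim (hu s) (hw s)

lemma wordLength_inv_le (hgen : Subgroup.closure (S : Set G) = ⊤) (hsym : ∀ s ∈ S, s⁻¹ ∈ S)
    (g : G) : wordLength S g⁻¹ ≤ wordLength S g := by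
  obtain ⟨w, hw, hwl, rfl⟩ := exists_word_length_eq_wordLength hgen hsym g
  rw [← hwl, List.prod_inv_reverse, ← List.length_map (f := fun s : G => s⁻¹),
    ← List.length_reverse]
  exact wordLength_prod_le fun s hs => by
    obtain ⟨t, ht, rfl⟩ := List.mem_map.mp (List.mem_reverse.mp hs)
    exact hsym t (hw t ht)

lemma wordLength_pow_le (hgen : Subgroup.closure (S : Set G) = ⊤) (hsym : ∀ s ∈ S, s⁻¹ ∈ S)
    (g : G) (k : ℕ) : wordLength S (g ^ k) ≤ k * wordLength S g := by
  induction k with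
  | zero => simpa using wordLength_prod_le (S := S) (w := []) (by simp)
  | succ k ih =>
    rw [pow_succ, Nat.succ_mul]
    exact (wordLength_mul_le hgen hsym _ _).trans (Nat.add_le_add_right ih _)

lemma wordLength_conj_le (hgen : Subgroup.closure (S : Set G) = ⊤) (hsym : ∀ s ∈ S, s⁻¹ ∈ S)
    (c a : G) : wordLength S (c * a * c⁻¹) ≤ wordLength S a + 2 * wordLength S c := by
  have h₁ := wordLength_mul_le hgen hsym (c * a) c⁻¹
  have h₂ := wordLength_mul_le hgen hsym c a
  have h₃ := wordLength_inv_le hgen hsym c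
  omega

lemma exists_wordLength_pow_mul_le_of_isConj (hgen : Subgroup.closure (S : Set G) = ⊤)
    (hsym : ∀ s ∈ S, s⁻¹ ∈ S) {a b : G} (hab : IsConj a b) :
    ∃ D : ℕ, ∀ k r : ℕ, wordLength S (b ^ (k * r)) ≤ k * (wordLength S (a ^ r) + D) := by
  obtain ⟨c, rfl⟩ := isConj_iff.mp hab
  refine ⟨2 * wordLength S c, fun k r => ?_⟩
  rw [mul_comm k, pow_mul, conj_pow]
  exact (wordLength_pow_le hgen hsym _ k).trans
    (Nat.mul_le_mul_left k (wordLength_conj_le hgen hsym c _))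

lemma finite_setOf_wordLength_le (hgen : Subgroup.closure (S : Set G) = ⊤)
    (hsym : ∀ s ∈ S, s⁻¹ ∈ S) (R : ℕ) : {g : G | wordLength S g ≤ R}.Finite := by
  refine ((List.finite_length_le S R).image fun w => (w.map Subtype.val).prod).subset ?_
  intro g hg
  obtain ⟨w, hw, hwl, rfl⟩ := exists_word_length_eq_wordLength hgen hsym g
  lift w to List S using hw
  refine ⟨w, ?_, rfl⟩
  rw [Set.mem_ofPred_eq, ← List.length_map Subtype.val, hwl]
  exact hg

lemma tendsto_wordLength_pow (hgen : Subgroup.closure (S : Set G) = ⊤)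
    (hsym : ∀ s ∈ S, s⁻¹ ∈ S) {g : G} (hg : ¬IsOfFinOrder g) :
    Tendsto (fun t : ℕ => wordLength S (g ^ t)) atTop atTop := by
  have hcofinite : Tendsto (wordLength S) cofinite atTop := tendsto_atTop.2 fun R =>
    eventually_cofinite.2 <| (finite_setOf_wordLength_le hgen hsym R).subset fun _ h =>
      (not_le.mp h).le
  have hpow := (injective_pow_iff_not_isOfFinOrder.mpr hg).tendsto_cofinite
  rw [Nat.cofinite_eq_atTop] at hpow
  exact hcofinite.comp hpow

end WordLength

lemma Real.sum_add_rpow_le_of_sum_rpow_le {ι : Type*} (s : Finset ι) {p : ℝ} (hp : 1 ≤ p)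
    {a b : ι → ℝ} (ha : ∀ i ∈ s, 0 ≤ a i) (hb : ∀ i ∈ s, 0 ≤ b i) {C : ℝ} (hC : 0 ≤ C)
    (h : ∑ i ∈ s, a i ^ p ≤ C ^ p) :
    ∑ i ∈ s, (a i + b i) ^ p ≤ (C + (∑ i ∈ s, b i ^ p) ^ (1 / p)) ^ p := by
  have hp0 : 0 < p := by linarith
  have hsum : ∀ f : ι → ℝ, (∀ i ∈ s, 0 ≤ f i) → 0 ≤ ∑ i ∈ s, f i ^ p := fun f hf =>
    Finset.sum_nonneg fun i hi => Real.rpow_nonneg (hf i hi) p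
  have hCa : (∑ i ∈ s, a i ^ p) ^ (1 / p) ≤ C := by
    rw [one_div, Real.rpow_inv_le_iff_of_pos (hsum a ha) hC hp0]
    exact h
  rw [← Real.rpow_inv_le_iff_of_pos (hsum _ fun i hi => add_nonneg (ha i hi) (hb i hi))
    (add_nonneg hC (Real.rpow_nonneg (hsum b hb) _)) hp0, ← one_div]
  exact (Real.Lp_add_le_of_nonneg s hp ha hb).trans (by gcongr)

open Matrix in
lemma Matrix.norm_eigenvalue_le_of_mulVec_le {n : Type*} [Fintype n] {B : Matrix n n ℝ}
    (hB : ∀ i j, 0 ≤ B i j) {W : n → ℝ} (hW : ∀ i, 0 < W i) {ρ : ℝ}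
    (hBW : ∀ i, (B *ᵥ W) i ≤ ρ * W i) {z : ℂ} {v : n → ℂ}
    (hv : (B.map fun x : ℝ => (x : ℂ)) *ᵥ v = z • v) (hv0 : v ≠ 0) : ‖z‖ ≤ ρ := by
  obtain ⟨j₀, hj₀⟩ := Function.ne_iff.mp hv0
  have : Nonempty n := ⟨j₀⟩
  obtain ⟨i, hi⟩ := Finite.exists_max fun j => ‖v j‖ / W j
  set t := ‖v i‖ / W i
  have hvW : ∀ j, ‖v j‖ ≤ t * W j := fun j => (div_le_iff₀ (hW j)).mp (hi j)
  have hvi : 0 < ‖v i‖ := by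
    have := (div_pos (norm_pos_iff.mpr hj₀) (hW j₀)).trans_le (hi j₀)
    exact (div_pos_iff_of_pos_right (hW i)).mp this
  refine le_of_mul_le_mul_right ?_ hvi
  calc ‖z‖ * ‖v i‖ = ‖∑ j, (B i j : ℂ) * v j‖ := by
        rw [← norm_mul, ← smul_eq_mul, ← Pi.smul_apply z v i, ← hv]
        simp [Matrix.mulVec, dotProduct]
    _ ≤ ∑ j, B i j * (t * W j) := by
        refine (norm_sum_le _ _).trans (Finset.sum_le_sum fun j _ => ?_)
        rw [norm_mul, Complex.norm_real, Real.norm_of_nonneg (hB i j)]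
        exact mul_le_mul_of_nonneg_left (hvW j) (hB i j)
    _ = t * (B *ᵥ W) i := by
        simp only [Matrix.mulVec, dotProduct, Finset.mul_sum]
        exact Finset.sum_congr rfl fun j _ => by ring
    _ ≤ t * (ρ * W i) := mul_le_mul_of_nonneg_left (hBW i) (div_nonneg (norm_nonneg _) (hW i).le)
    _ = ρ * ‖v i‖ := by rw [mul_left_comm, div_mul_cancel₀ _ (hW i).ne']

open Matrix in
lemma Matrix.pow_mulVec_eq_pow_smul {n R : Type*} [Fintype n] [DecidableEq n] [CommRing R]
    {M : Matrix n n R} {v : n → R} {z : R} (h : M *ᵥ v = z • v) (k : ℕ) :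
    (M ^ k) *ᵥ v = z ^ k • v := by
  induction k with
  | zero => simp
  | succ k ih => rw [pow_succ', ← mulVec_mulVec, ih, mulVec_smul, h, smul_smul, pow_succ]

namespace SelfSimilarGroup

variable {X G : Type*} [Group G] (A : SelfSimilarGroup X G)

lemma act_pow (g : G) (n : ℕ) : A.act (g ^ n) = (A.act g)^[n] := by
  induction n with
  | zero => funext v; simp [A.act_one]
  | succ n ih => funext v; rw [pow_succ, A.act_mul, ih, Function.iterate_succ_apply]

lemma act_inv_act (g : G) (v : List X) : A.act g⁻¹ (A.act g v) = v := by
  rw [← A.act_mul, inv_mul_cancel, A.act_one]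

lemma act_injective (g : G) : Function.Injective (A.act g) :=
  Function.LeftInverse.injective (A.act_inv_act g)

lemma sec_inv_act (g : G) (v : List X) : A.sec g⁻¹ (A.act g v) = (A.sec g v)⁻¹ := by
  have h := A.sec_mul g⁻¹ g v
  rw [inv_mul_cancel, A.sec_one] at h
  exact eq_inv_of_mul_eq_one_left h.symm

lemma sec_pow_mul_of_act_eq {g : G} {v : List X} {k : ℕ} (h : A.act (g ^ k) v = v) (q : ℕ) :
    A.sec (g ^ (k * q)) v = A.sec (g ^ k) v ^ q := by
  induction q with
  | zero => simp [A.sec_one]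
  | succ q ih => rw [Nat.mul_succ, pow_add, A.sec_mul, h, ih, pow_succ]

lemma act_conj (t b : G) (v : List X) : A.act (t * b * t⁻¹) (A.act t v) = A.act t (A.act b v) := by
  rw [A.act_mul, A.act_inv_act, A.act_mul]

lemma sec_conj_of_act_eq {t b : G} {v : List X} (h : A.act b v = v) :
    A.sec (t * b * t⁻¹) (A.act t v) = A.sec t v * A.sec b v * (A.sec t v)⁻¹ := by
  rw [A.sec_mul, A.sec_inv_act, A.act_inv_act, A.sec_mul, h]

lemma exists_act_pow_eq_self [Finite X] (g : G) (v : List X) :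
    ∃ k, 0 < k ∧ A.act (g ^ k) v = v := by
  have : Finite {w : List X // w.length = v.length} := (List.finite_length_eq X v.length).to_subtype
  obtain ⟨a, b, hab, hsub⟩ := Finite.exists_ne_map_eq_of_infinite
    fun t : ℕ => (⟨A.act (g ^ t) v, A.length_act _ v⟩ : {w : List X // w.length = v.length})
  have heq : A.act (g ^ a) v = A.act (g ^ b) v := congrArg Subtype.val hsub
  clear hsub
  wlog hlt : a < b generalizing a b
  · exact this b a hab.symm heq.symm (by omega)
  refine ⟨b - a, by omega, A.act_injective (g ^ a) ?_⟩
  rw [← A.act_mul, ← pow_add, Nat.add_sub_cancel' hlt.le, heq]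

open Function in
lemma cycLen_eq_minimalPeriod (g : G) (v : List X) :
    cycLen A g v = minimalPeriod (A.act g) v := by
  rw [minimalPeriod_eq_sInf_n_pos_IsPeriodicPt, cycLen]
  congr! 3 with k
  rw [A.act_pow, Nat.one_le_iff_ne_zero, gt_iff_lt, Nat.pos_iff_ne_zero]
  rfl

lemma act_pow_eq_self_iff (g : G) (v : List X) (t : ℕ) :
    A.act (g ^ t) v = v ↔ cycLen A g v ∣ t := by
  rw [cycLen_eq_minimalPeriod, ← Function.isPeriodicPt_iff_minimalPeriod_dvd, A.act_pow]
  rfl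

lemma cycLen_eq_iff (g : G) (v : List X) (d : ℕ) :
    cycLen A g v = d ↔ ∀ t, A.act (g ^ t) v = v ↔ d ∣ t := by
  simp only [act_pow_eq_self_iff, Nat.dvd_right_iff_eq]

lemma act_pow_cycLen (g : G) (v : List X) : A.act (g ^ cycLen A g v) v = v :=
  (A.act_pow_eq_self_iff g v _).mpr dvd_rfl

lemma cycLen_pos [Finite X] (g : G) (v : List X) : 0 < cycLen A g v := by
  obtain ⟨k, hk, hfix⟩ := A.exists_act_pow_eq_self g v
  exact Nat.pos_of_dvd_of_pos ((A.act_pow_eq_self_iff g v k).mp hfix) hk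

lemma sec_pow_of_cycLen_dvd [Finite X] {g : G} {v : List X} {t : ℕ} (h : cycLen A g v ∣ t) :
    A.sec (g ^ t) v = A.sec (g ^ cycLen A g v) v ^ (t / cycLen A g v) := by
  obtain ⟨q, rfl⟩ := h
  rw [A.sec_pow_mul_of_act_eq (A.act_pow_cycLen g v),
    Nat.mul_div_cancel_left q (A.cycLen_pos g v)]

lemma cycLen_append [Finite X] (g : G) (u w : List X) :
    cycLen A g (u ++ w) = cycLen A g u * cycLen A (A.sec (g ^ cycLen A g u) u) w := by
  rw [cycLen_eq_iff]
  intro t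
  have hk := A.cycLen_pos g u
  rw [A.act_append, List.append_eq_append_iff_of_size_eq_left (A.length_act _ u)]
  constructor
  · rintro ⟨hu, hw⟩
    have hdvd := (A.act_pow_eq_self_iff g u t).mp hu
    rw [A.sec_pow_of_cycLen_dvd hdvd, act_pow_eq_self_iff] at hw
    obtain ⟨q, rfl⟩ := hdvd
    rw [Nat.mul_div_cancel_left q hk] at hw
    exact Nat.mul_dvd_mul_left _ hw
  · rintro ⟨q, rfl⟩
    rw [mul_assoc]
    have hdvd := dvd_mul_right (cycLen A g u) (cycLen A (A.sec (g ^ cycLen A g u) u) w * q)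
    refine ⟨(A.act_pow_eq_self_iff g u _).mpr hdvd, ?_⟩
    rw [A.sec_pow_of_cycLen_dvd hdvd, Nat.mul_div_cancel_left _ hk, act_pow_eq_self_iff]
    exact dvd_mul_right _ _

lemma sec_pow_cycLen_append [Finite X] (g : G) (u w : List X) :
    A.sec (g ^ cycLen A g (u ++ w)) (u ++ w) =
      A.sec (A.sec (g ^ cycLen A g u) u ^ cycLen A (A.sec (g ^ cycLen A g u) u) w) w := by
  rw [A.cycLen_append, A.sec_append, A.sec_pow_of_cycLen_dvd (dvd_mul_right _ _),
    Nat.mul_div_cancel_left _ (A.cycLen_pos g u)]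

lemma cycLen_conj (t b : G) (v : List X) :
    cycLen A (t * b * t⁻¹) (A.act t v) = cycLen A b v := by
  rw [cycLen_eq_iff]
  intro s
  rw [conj_pow, act_conj, (A.act_injective t).eq_iff, act_pow_eq_self_iff]

lemma isOfFinOrder_sec_pow_cycLen [Finite X] {h : G} (hh : IsOfFinOrder h) (v : List X) :
    IsOfFinOrder (A.sec (h ^ cycLen A h v) v) := by
  obtain ⟨N, hN, hpow⟩ := isOfFinOrder_iff_pow_eq_one.mp hh
  refine isOfFinOrder_iff_pow_eq_one.mpr ⟨N, hN, ?_⟩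
  rw [← A.sec_pow_mul_of_act_eq (A.act_pow_cycLen h v), mul_comm, pow_mul, hpow, one_pow,
    A.sec_one]

def actWord (g : G) {n : ℕ} (v : Fin n → X) : Fin n → X :=
  fun i => (A.act g (List.ofFn v)).get (i.cast (by rw [A.length_act, List.length_ofFn]))

lemma ofFn_actWord (g : G) {n : ℕ} (v : Fin n → X) :
    List.ofFn (A.actWord g v) = A.act g (List.ofFn v) :=
  List.ext_get (by simp [A.length_act]) fun _ _ _ => by simp [actWord]

def wordPerm (g : G) (n : ℕ) : Equiv.Perm (Fin n → X) where
  toFun := A.actWord g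
  invFun := A.actWord g⁻¹
  left_inv v := List.ofFn_injective (by rw [ofFn_actWord, ofFn_actWord, act_inv_act])
  right_inv v := List.ofFn_injective (by
    rw [ofFn_actWord, ofFn_actWord, ← A.act_mul, mul_inv_cancel, act_one])

variable [Fintype X]

/-- For `n ≥ 1` and a class function `φ`, the value of `φ` on the image of `[h]` under the
`n`-th iterate of the Thurston `p`-map. (For `n = 0` it is `φ (A.sec h [])`, and `A.sec h []`
need not be `h`.) -/
noncomputable def thurstonSum (p : ℝ) (n : ℕ) (φ : G → ℝ) (h : G) : ℝ :=
  ∑ v : Fin n → X, (cycLen A h (List.ofFn v) : ℝ) ^ (-p) *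
    φ (A.sec (h ^ cycLen A h (List.ofFn v)) (List.ofFn v))

lemma thurstonSum_succ (p : ℝ) (n : ℕ) (φ : G → ℝ) (h : G) :
    A.thurstonSum p (n + 1) φ h =
      ∑ x : X, (cycLen A h [x] : ℝ) ^ (-p) *
        A.thurstonSum p n φ (A.sec (h ^ cycLen A h [x]) [x]) := by
  rw [thurstonSum, ← (Fin.consEquiv fun _ => X).sum_comp, Fintype.sum_prod_type]
  refine Finset.sum_congr rfl fun x _ => ?_
  rw [thurstonSum, Finset.mul_sum]
  refine Finset.sum_congr rfl fun v _ => ?_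
  have hword : List.ofFn (Fin.consEquiv (fun _ => X) (x, v)) = [x] ++ List.ofFn v := by
    simp [Fin.consEquiv]
  rw [hword, A.sec_pow_cycLen_append, A.cycLen_append, Nat.cast_mul,
    Real.mul_rpow (Nat.cast_nonneg _) (Nat.cast_nonneg _), mul_assoc]

lemma thurstonSum_eq_zero_of_isOfFinOrder (p : ℝ) (n : ℕ) {φ : G → ℝ}
    (hφ : ∀ u, IsOfFinOrder u → φ u = 0) {h : G} (hh : IsOfFinOrder h) :
    A.thurstonSum p n φ h = 0 :=
  Finset.sum_eq_zero fun v _ => by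
    rw [hφ _ (A.isOfFinOrder_sec_pow_cycLen hh _), mul_zero]

lemma thurstonSum_conj_eq (p : ℝ) (n : ℕ) {φ : G → ℝ}
    (hφ : ∀ a b, IsConj a b → φ a = φ b) (t b : G) :
    A.thurstonSum p n φ (t * b * t⁻¹) = A.thurstonSum p n φ b := by
  rw [thurstonSum, ← Equiv.sum_comp (A.wordPerm t n)]
  refine Finset.sum_congr rfl fun v _ => ?_
  have hword : List.ofFn (A.wordPerm t n v) = A.act t (List.ofFn v) := A.ofFn_actWord t v
  rw [hword, cycLen_conj, conj_pow, A.sec_conj_of_act_eq (A.act_pow_cycLen b _)]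
  exact congrArg _ (hφ _ _ (isConj_iff.mpr ⟨(A.sec t (List.ofFn v))⁻¹, by group⟩))

lemma thurstonSum_eq_of_isConj (p : ℝ) (n : ℕ) {φ : G → ℝ}
    (hφ : ∀ a b, IsConj a b → φ a = φ b) {a b : G} (hab : IsConj a b) :
    A.thurstonSum p n φ a = A.thurstonSum p n φ b := by
  obtain ⟨t, rfl⟩ := isConj_iff.mp hab
  exact (A.thurstonSum_conj_eq p n hφ t a).symm

lemma sum_thurstonSum_mul {ι : Type*} [Fintype ι] (p : ℝ) (n : ℕ) (φ : ι → G → ℝ) (c : ι → ℝ)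
    (h : G) :
    ∑ j, A.thurstonSum p n (φ j) h * c j = A.thurstonSum p n (fun u => ∑ j, φ j u * c j) h := by
  simp only [thurstonSum, Finset.sum_mul, Finset.mul_sum]
  rw [Finset.sum_comm]
  exact Finset.sum_congr rfl fun v _ => Finset.sum_congr rfl fun j _ => by ring

end SelfSimilarGroup

section LevelMatrix

variable {X G : Type*} [Group G]

open Classical in
noncomputable def conjIndicator (b u : G) : ℝ := if IsConj u b then 1 else 0

lemma conjIndicator_eq_of_isConj (b : G) {u u' : G} (h : IsConj u u') :
    conjIndicator b u = conjIndicator b u' := by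
  unfold conjIndicator
  congr 1
  exact propext ⟨h.symm.trans, h.trans⟩

lemma conjIndicator_eq_zero_of_isOfFinOrder {b u : G} (hb : ¬IsOfFinOrder b)
    (hu : IsOfFinOrder u) : conjIndicator b u = 0 :=
  if_neg fun h => hb (h.isOfFinOrder hu)

lemma sum_conjIndicator_mul {m : ℕ} {g : Fin m → G} (hnconj : ∀ i j, i ≠ j → ¬IsConj (g i) (g j))
    {u : G} {j : Fin m} (hu : IsConj u (g j)) (c : Fin m → ℝ) :
    ∑ i, conjIndicator (g i) u * c i = c j := by
  rw [Finset.sum_eq_single j (fun i _ hij => ?_) (by simp), conjIndicator, if_pos hu, one_mul]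
  rw [conjIndicator, if_neg fun hi => hnconj i j hij (hi.symm.trans hu), zero_mul]

variable [Fintype X] (A : SelfSimilarGroup X G) (p : ℝ) {m : ℕ} (g : Fin m → G)

noncomputable def levelMatrix (n : ℕ) : Matrix (Fin m) (Fin m) ℝ :=
  Matrix.of fun i j => A.thurstonSum p n (conjIndicator (g j)) (g i)

lemma levelMatrix_nonneg (n : ℕ) (i j : Fin m) : 0 ≤ levelMatrix A p g n i j :=
  Finset.sum_nonneg fun _ _ => mul_nonneg (Real.rpow_nonneg (Nat.cast_nonneg _) _)
    (by unfold conjIndicator; split_ifs <;> norm_num)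

lemma levelMatrix_one : levelMatrix A p g 1 = thurstonMatrix A p g := by
  ext i j
  refine Fintype.sum_equiv (Equiv.funUnique (Fin 1) X) _ _ fun v => ?_
  have hword : List.ofFn v = [v 0] := by simp
  rw [hword]
  rfl

variable {g}

lemma thurstonSum_conjIndicator_eq_sum (hinf : ∀ i, ¬IsOfFinOrder (g i))
    (hnconj : ∀ i j, i ≠ j → ¬IsConj (g i) (g j)) (n : ℕ) {u : G}
    (hu : IsOfFinOrder u ∨ ∃ j, IsConj u (g j)) (l : Fin m) :
    A.thurstonSum p n (conjIndicator (g l)) u =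
      ∑ j, conjIndicator (g j) u * levelMatrix A p g n j l := by
  rcases hu with hfin | ⟨j, hj⟩
  · rw [A.thurstonSum_eq_zero_of_isOfFinOrder p n
      (fun _ => conjIndicator_eq_zero_of_isOfFinOrder (hinf l)) hfin]
    simp [conjIndicator_eq_zero_of_isOfFinOrder (hinf _) hfin]
  · rw [sum_conjIndicator_mul hnconj hj]
    exact A.thurstonSum_eq_of_isConj p n (fun _ _ => conjIndicator_eq_of_isConj _) hj

lemma levelMatrix_succ (hinf : ∀ i, ¬IsOfFinOrder (g i))
    (hnconj : ∀ i j, i ≠ j → ¬IsConj (g i) (g j))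
    (hinv : ∀ (i : Fin m) (x : X),
      IsOfFinOrder (A.sec ((g i) ^ (cycLen A (g i) [x])) [x]) ∨
        ∃ j, IsConj (A.sec ((g i) ^ (cycLen A (g i) [x])) [x]) (g j)) (n : ℕ) :
    levelMatrix A p g (n + 1) = thurstonMatrix A p g * levelMatrix A p g n := by
  ext i l
  rw [Matrix.mul_apply, levelMatrix, Matrix.of_apply, A.thurstonSum_succ]
  simp only [thurstonMatrix, Matrix.of_apply, Finset.sum_mul]
  rw [Finset.sum_comm]
  refine Finset.sum_congr rfl fun x _ => ?_
  simp only [mul_assoc, ← Finset.mul_sum]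
  rw [thurstonSum_conjIndicator_eq_sum A p hinf hnconj n (hinv i x) l]
  rfl

lemma levelMatrix_eq_pow (hinf : ∀ i, ¬IsOfFinOrder (g i))
    (hnconj : ∀ i j, i ≠ j → ¬IsConj (g i) (g j))
    (hinv : ∀ (i : Fin m) (x : X),
      IsOfFinOrder (A.sec ((g i) ^ (cycLen A (g i) [x])) [x]) ∨
        ∃ j, IsConj (A.sec ((g i) ^ (cycLen A (g i) [x])) [x]) (g j)) {n : ℕ} (hn : 1 ≤ n) :
    levelMatrix A p g n = thurstonMatrix A p g ^ n := by
  induction n, hn using Nat.le_induction with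
  | base => rw [levelMatrix_one, pow_one]
  | succ n _ ih => rw [levelMatrix_succ A p hinf hnconj hinv, ih, pow_succ']

end LevelMatrix

lemma exists_sum_rpow_le_of_eta_lt_one {X G : Type*} [Fintype X] [Group G]
    (A : SelfSimilarGroup X G) (S : Finset G) {p : ℝ} (hp : 0 < p) {n : ℕ}
    (h : eta A S p n < 1) :
    ∃ c : ℝ, 0 ≤ c ∧ c < 1 ∧ ∀ᶠ g in comap (wordLength S) atTop,
      ∑ v : Fin n → X, (wordLength S (A.sec g (List.ofFn v)) : ℝ) ^ p ≤
        (c * wordLength S g) ^ p := by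
  obtain ⟨a, heta, ha⟩ := exists_between h
  have ha_top : a ≠ ⊤ := ha.ne_top
  refine ⟨a.toReal, ENNReal.toReal_nonneg, ENNReal.toReal_lt_of_lt_ofReal (by simpa using ha), ?_⟩
  filter_upwards [eventually_lt_of_limsup_lt heta,
    (eventually_ge_atTop 1).comap (wordLength S)] with g hg hg1
  have hl0 : (wordLength S g : ℝ≥0∞) ≠ 0 := by exact_mod_cast (by omega : wordLength S g ≠ 0)
  rw [ENNReal.div_lt_iff (Or.inl hl0) (Or.inl (ENNReal.natCast_ne_top _)), one_div] at hg
  have hle := (ENNReal.rpow_inv_le_iff hp).mp hg.le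
  have hfin : (a * wordLength S g) ^ p ≠ ⊤ :=
    ENNReal.rpow_ne_top_of_nonneg hp.le (ENNReal.mul_ne_top ha_top (ENNReal.natCast_ne_top _))
  have hreal := ENNReal.toReal_mono hfin hle
  rw [ENNReal.toReal_sum fun v _ => ENNReal.rpow_ne_top_of_nonneg hp.le (ENNReal.natCast_ne_top _)]
    at hreal
  simpa only [← ENNReal.toReal_rpow, ENNReal.toReal_mul, ENNReal.toReal_natCast] using hreal

section Contraction

open Matrix

variable {X G : Type*} [Fintype X] [Group G] (A : SelfSimilarGroup X G) {S : Finset G}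

lemma exists_cycLen_rpow_neg_mul_sum_le (hgen : Subgroup.closure (S : Set G) = ⊤)
    (hsym : ∀ s ∈ S, s⁻¹ ∈ S) {p : ℝ} (hp : 0 < p) {m : ℕ} {g : Fin m → G}
    (hnconj : ∀ i j, i ≠ j → ¬IsConj (g i) (g j)) (h : G) (v : List X) :
    ∃ D : ℕ, ∀ N, cycLen A h v ∣ N →
      (cycLen A h v : ℝ) ^ (-p) *
          ∑ j, conjIndicator (g j) (A.sec (h ^ cycLen A h v) v) * (wordLength S (g j ^ N) : ℝ) ^ p
        ≤ ((wordLength S (A.sec (h ^ N) v) : ℝ) + D) ^ p := by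
  set k := cycLen A h v
  have hk : (0 : ℝ) < k := Nat.cast_pos.mpr (A.cycLen_pos h v)
  by_cases hconj : ∃ j, IsConj (A.sec (h ^ k) v) (g j)
  · obtain ⟨j, hj⟩ := hconj
    obtain ⟨D, hD⟩ := exists_wordLength_pow_mul_le_of_isConj hgen hsym hj
    refine ⟨D, fun N hN => ?_⟩
    rw [sum_conjIndicator_mul hnconj hj, A.sec_pow_of_cycLen_dvd hN]
    have hlen : (wordLength S (g j ^ N) : ℝ) ≤
        k * ((wordLength S (A.sec (h ^ k) v ^ (N / k)) : ℝ) + D) := by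
      exact_mod_cast Nat.mul_div_cancel' hN ▸ hD k (N / k)
    rw [Real.rpow_neg hk.le, ← Real.inv_rpow hk.le, ← Real.mul_rpow (by positivity) (by positivity)]
    exact Real.rpow_le_rpow (by positivity) ((inv_mul_le_iff₀ hk).mpr hlen) hp.le
  · refine ⟨0, fun N _ => ?_⟩
    push Not at hconj
    rw [Finset.sum_eq_zero fun j _ => by rw [conjIndicator, if_neg (hconj j), zero_mul], mul_zero]
    positivity

lemma exists_levelMatrix_mulVec_le (hgen : Subgroup.closure (S : Set G) = ⊤)
    (hsym : ∀ s ∈ S, s⁻¹ ∈ S) {p : ℝ} (hp : 1 ≤ p) {m : ℕ} {g : Fin m → G}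
    (hnconj : ∀ i j, i ≠ j → ¬IsConj (g i) (g j)) (n : ℕ) {c : ℝ} (hc : 0 ≤ c) (i : Fin m) :
    ∃ D : ℝ, 0 ≤ D ∧ ∀ N : ℕ, (∀ v : Fin n → X, cycLen A (g i) (List.ofFn v) ∣ N) →
      ∑ v : Fin n → X, (wordLength S (A.sec (g i ^ N) (List.ofFn v)) : ℝ) ^ p ≤
          (c * wordLength S (g i ^ N)) ^ p →
      (levelMatrix A p g n *ᵥ fun j => (wordLength S (g j ^ N) : ℝ) ^ p) i ≤
        (c * wordLength S (g i ^ N) + D) ^ p := by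
  choose D hD using fun v : Fin n → X =>
    exists_cycLen_rpow_neg_mul_sum_le A hgen hsym (zero_lt_one.trans_le hp) hnconj (g i)
      (List.ofFn v)
  refine ⟨(∑ v, (D v : ℝ) ^ p) ^ (1 / p), by positivity, fun N hN hcN => ?_⟩
  calc (levelMatrix A p g n *ᵥ fun j => (wordLength S (g j ^ N) : ℝ) ^ p) i
      = A.thurstonSum p n
          (fun u => ∑ j, conjIndicator (g j) u * (wordLength S (g j ^ N) : ℝ) ^ p) (g i) :=
        A.sum_thurstonSum_mul p n (fun j => conjIndicator (g j)) _ (g i)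
    _ ≤ ∑ v : Fin n → X, ((wordLength S (A.sec (g i ^ N) (List.ofFn v)) : ℝ) + D v) ^ p :=
        Finset.sum_le_sum fun v _ => hD v N (hN v)
    _ ≤ _ := Real.sum_add_rpow_le_of_sum_rpow_le _ hp (fun _ _ => Nat.cast_nonneg _)
        (fun _ _ => Nat.cast_nonneg _) (by positivity) hcN

/-- `W = (l(g_j^N)^p)_j` for `N` a large multiple of every cycle length of the `g_i` on `X^n`. -/
lemma exists_pos_levelMatrix_mulVec_le (hgen : Subgroup.closure (S : Set G) = ⊤)
    (hsym : ∀ s ∈ S, s⁻¹ ∈ S) {p : ℝ} (hp : 1 ≤ p) {m : ℕ} {g : Fin m → G}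
    (hinf : ∀ i, ¬IsOfFinOrder (g i)) (hnconj : ∀ i j, i ≠ j → ¬IsConj (g i) (g j)) {n : ℕ}
    (heta : eta A S p n < 1) :
    ∃ W : Fin m → ℝ, (∀ i, 0 < W i) ∧ ∃ ρ < 1, ∀ i, (levelMatrix A p g n *ᵥ W) i ≤ ρ * W i := by
  have hp0 : 0 < p := by linarith
  obtain ⟨c, hc0, hc1, hc⟩ := exists_sum_rpow_le_of_eta_lt_one A S hp0 heta
  choose D hD0 hD using exists_levelMatrix_mulVec_le A hgen hsym hp hnconj n hc0
  set L := ∏ i, ∏ v : Fin n → X, cycLen A (g i) (List.ofFn v)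
  have hL : 0 < L := Finset.prod_pos fun i _ => Finset.prod_pos fun v _ => A.cycLen_pos _ _
  have hdvd : ∀ q i v, cycLen A (g i) (List.ofFn v) ∣ L * q := fun q i v =>
    ((Finset.dvd_prod_of_mem (fun v => cycLen A (g i) (List.ofFn v)) (Finset.mem_univ v)).trans
      (Finset.dvd_prod_of_mem (fun i => ∏ v : Fin n → X, cycLen A (g i) (List.ofFn v))
        (Finset.mem_univ i))).mul_right q
  have htend : ∀ i, Tendsto (fun q => g i ^ (L * q)) atTop (comap (wordLength S) atTop) :=
    fun i => tendsto_comap_iff.mpr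
      ((tendsto_wordLength_pow hgen hsym (hinf i)).comp (tendsto_id.const_mul_atTop' hL))
  have hev : ∀ᶠ q in atTop, ∀ i,
      ∑ v : Fin n → X, (wordLength S (A.sec (g i ^ (L * q)) (List.ofFn v)) : ℝ) ^ p ≤
          (c * wordLength S (g i ^ (L * q))) ^ p ∧
        2 * D i + 1 ≤ (1 - c) * wordLength S (g i ^ (L * q)) := by
    refine eventually_all.mpr fun i => ((htend i).eventually hc).and ?_
    exact ((tendsto_natCast_atTop_atTop.comp (tendsto_comap_iff.mp (htend i))).const_mul_atTop
      (sub_pos.mpr hc1)).eventually_ge_atTop _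
  obtain ⟨q, hq⟩ := hev.exists
  have hpos : ∀ i, (0 : ℝ) < wordLength S (g i ^ (L * q)) := fun i => by
    nlinarith [(hq i).2, hD0 i, (Nat.cast_nonneg (wordLength S (g i ^ (L * q))) : (0 : ℝ) ≤ _)]
  refine ⟨fun j => (wordLength S (g j ^ (L * q)) : ℝ) ^ p, fun j => Real.rpow_pos_of_pos (hpos j) p,
    ((1 + c) / 2) ^ p, Real.rpow_lt_one (by positivity) (by linarith) hp0, fun i => ?_⟩
  calc _ ≤ (c * wordLength S (g i ^ (L * q)) + D i) ^ p := hD i _ (hdvd q i) (hq i).1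
    _ ≤ ((1 + c) / 2 * wordLength S (g i ^ (L * q))) ^ p :=
        Real.rpow_le_rpow (add_nonneg (by positivity) (hD0 i)) (by linarith [(hq i).2]) hp0.le
    _ = _ := Real.mul_rpow (by positivity) (Nat.cast_nonneg _)

end Contraction

theorem thurston_spectral_radius_lt_one_general {X G : Type*} [Fintype X] [Group G]
    (A : SelfSimilarGroup X G) (S : Finset G)
    (hgen : Subgroup.closure (S : Set G) = ⊤)
    (hsym : ∀ s ∈ S, s⁻¹ ∈ S)
    (p : ℝ) (hp : 1 ≤ p) {m : ℕ} (g : Fin m → G)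
    (hinf : ∀ i, ¬ IsOfFinOrder (g i))
    (hnconj : ∀ i j, i ≠ j → ¬ IsConj (g i) (g j))
    (hinv : ∀ (i : Fin m) (x : X),
      IsOfFinOrder (A.sec ((g i) ^ (cycLen A (g i) [x])) [x]) ∨
        ∃ j, IsConj (A.sec ((g i) ^ (cycLen A (g i) [x])) [x]) (g j))
    (hcontr : ∃ n₀ : ℕ, 1 ≤ n₀ ∧ eta A S p n₀ < 1) :
    ∀ (z : ℂ) (v : Fin m → ℂ),
      ((thurstonMatrix A p g).map (fun x : ℝ => (x : ℂ))).mulVec v = z • v →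
      v ≠ 0 → ‖z‖ < 1 := by
  intro z v hv hv0
  obtain ⟨n₀, hn₀, heta⟩ := hcontr
  obtain ⟨W, hW, ρ, hρ, hBW⟩ := exists_pos_levelMatrix_mulVec_le A hgen hsym hp hinf hnconj heta
  have hpow : ((levelMatrix A p g n₀).map fun x : ℝ => (x : ℂ)).mulVec v = z ^ n₀ • v := by
    rw [levelMatrix_eq_pow A p hinf hnconj hinv hn₀,
      show ((thurstonMatrix A p g ^ n₀).map fun x : ℝ => (x : ℂ)) =
        (thurstonMatrix A p g).map (fun x : ℝ => (x : ℂ)) ^ n₀ from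
      map_pow Complex.ofRealHom.mapMatrix _ n₀]
    exact Matrix.pow_mulVec_eq_pow_smul hv n₀
  have hz := Matrix.norm_eigenvalue_le_of_mulVec_le (levelMatrix_nonneg A p g n₀) hW hBW hpow hv0
  rw [norm_pow] at hz
  exact (pow_lt_one_iff_of_nonneg (norm_nonneg z) (by omega)).mp (hz.trans_lt hρ)

/-- Theorem 4.8. Let `g₁,…,g_m` be pairwise non-conjugate elements of
infinite order spanning a `T_p`-invariant subspace (the section along each first-level cycle
has finite order or is conjugate to some `g_j`). If `η_{p,n₀} < 1` for some `n₀ ≥ 1`, then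
the spectral radius of the Thurston matrix is `< 1`: every complex eigenvalue has
modulus `< 1`. -/
theorem thurston_spectral_radius_lt_one {X G : Type*} [Fintype X] [Nonempty X] [Group G]
    (A : SelfSimilarGroup X G) (S : Finset G)
    (hgen : Subgroup.closure (S : Set G) = ⊤)
    (hsym : ∀ s ∈ S, s⁻¹ ∈ S)
    (p : ℝ) (hp : 1 ≤ p) {m : ℕ} (g : Fin m → G)
    (hinf : ∀ i, ¬ IsOfFinOrder (g i))
    (hnconj : ∀ i j, i ≠ j → ¬ IsConj (g i) (g j))
    (hinv : ∀ (i : Fin m) (x : X),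
      IsOfFinOrder (A.sec ((g i) ^ (cycLen A (g i) [x])) [x]) ∨
        ∃ j, IsConj (A.sec ((g i) ^ (cycLen A (g i) [x])) [x]) (g j))
    (hcontr : ∃ n₀ : ℕ, 1 ≤ n₀ ∧ eta A S p n₀ < 1) :
    ∀ (z : ℂ) (v : Fin m → ℂ),
      ((thurstonMatrix A p g).map (fun x : ℝ => (x : ℂ))).mulVec v = z • v →
      v ≠ 0 → ‖z‖ < 1 :=
  thurston_spectral_radius_lt_one_general A S hgen hsym p hp g hinf hnconj hinv hcontr
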